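/- arXiv:2512.13437 — 2 statements merged into one kernel-verified Lean document; each statement's English description precedes it below -/
import Mathlib

section
/- Let n ≥ k ≥ 3. For every X = (x_{ij}) ∈ M_{n,2}(F) there exists B ∈ M_{n,k−2}(F) such that det_{n,k}(X|B) = Σ_{l=3}^{n−k+3} (−1)^l · [ (x_{1,1} − x_{2,1})·x_{l,2} − (x_{1,2} − x_{2,2})·x_{l,1} ]. -/
/- The Cullis determinant of an `n × k` matrix: the alternating sum of its maximal
(`k × k`) minors, indexed by strictly increasing selections of `k` rows. -/
open Classical in
noncomputable def cullisDet {F : Type*} [Field F] {n k : ℕ} (X : Matrix (Fin n) (Fin k) F) : F :=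
  ∑ f ∈ Finset.univ.filter (fun f : Fin k → Fin n => StrictMono f),
    (-1 : F) ^ (∑ α : Fin k, ((f α : ℕ) + (α : ℕ))) * (X.submatrix f id).det

/-- The block matrix `X|B` obtained by appending the `k − 2` columns of `B` to the
right of the two columns of `X`. -/
def hcatK {F : Type*} [Field F] {n k : ℕ} (X : Matrix (Fin n) (Fin 2) F)
    (B : Matrix (Fin n) (Fin (k - 2)) F) : Matrix (Fin n) (Fin k) F :=
  fun i j =>
    if h : (j : ℕ) < 2 then X i ⟨(j : ℕ), h⟩
    else B i ⟨(j : ℕ) - 2, by have := j.isLt; omega⟩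

/-! Expanding a Cullis determinant along its last row gives the Cullis determinant of the other
rows plus a Laplace-type sum `Σ_j ± x_{n,j} det_{n-1,k-1}(…)`. Take for `B` the column
`±(e₁ + e₂)` followed by the unit vectors of the last `k - 3` rows. Expanding along the last
`k - 3` rows strips them off together with those unit columns, leaving the `(n - k + 3) × 3`
matrix `(x₁ | x₂ | ±(e₁ + e₂))`. Expanding that one row at a time, row `l ≥ 3` contributes
exactly the `l`-th summand: the one-column Cullis determinant of `e₁ + e₂` is `1 - 1 = 0`,
and the two-column one of `(y | e₁ + e₂)` is `y₁ - y₂`. -/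

open Finset Matrix

lemma strictMono_snoc_castSucc_last {n k : ℕ} {g : Fin k → Fin n} (hg : StrictMono g) :
    StrictMono (Fin.snoc (Fin.castSucc ∘ g) (Fin.last n) : Fin (k + 1) → Fin (n + 1)) := by
  intro a b hab
  obtain ⟨a, rfl⟩ := Fin.eq_castSucc_of_ne_last (Fin.ne_last_of_lt hab)
  induction b using Fin.lastCases with
  | last => simp [Fin.castSucc_lt_last]
  | cast b => simpa using hg (Fin.castSucc_lt_castSucc_iff.mp hab)

section CullisDet

variable {F : Type*} [Field F] {n k : ℕ}

def cullisTerm (M : Matrix (Fin n) (Fin k) F) (f : Fin k → Fin n) : F :=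
  (-1) ^ (∑ α : Fin k, ((f α : ℕ) + (α : ℕ))) * (M.submatrix f id).det

open Classical in
lemma cullisDet_eq_sum_cullisTerm (M : Matrix (Fin n) (Fin k) F) :
    cullisDet M = ∑ f ∈ univ.filter (fun f : Fin k → Fin n => StrictMono f), cullisTerm M f :=
  rfl

lemma cullisDet_eq_zero_of_lt (M : Matrix (Fin n) (Fin k) F) (h : n < k) : cullisDet M = 0 := by
  refine sum_eq_zero fun f hf => absurd (Fintype.card_le_of_injective f ?_) (by simpa using h)
  exact (mem_filter.mp hf).2.injective

@[simp]
lemma cullisDet_fin_zero (M : Matrix (Fin n) (Fin 0) F) : cullisDet M = 1 := by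
  simp [cullisDet, StrictMono, det_isEmpty]

lemma cullisDet_eq_zero_of_col_eq_zero (M : Matrix (Fin n) (Fin k) F) (j : Fin k)
    (h : ∀ i, M i j = 0) : cullisDet M = 0 :=
  sum_eq_zero fun f _ => by
    rw [det_eq_zero_of_column_eq_zero (A := M.submatrix f id) j fun i => h (f i), mul_zero]

lemma cullisTerm_castSucc_comp (M : Matrix (Fin (n + 1)) (Fin k) F) (g : Fin k → Fin n) :
    cullisTerm M (Fin.castSucc ∘ g) = cullisTerm (M.submatrix Fin.castSucc id) g := by
  simp [cullisTerm, submatrix_submatrix]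

lemma cullisTerm_snoc_last (M : Matrix (Fin (n + 1)) (Fin (k + 1)) F) (g : Fin k → Fin n) :
    cullisTerm M (Fin.snoc (Fin.castSucc ∘ g) (Fin.last n)) =
      ∑ j : Fin (k + 1), (-1) ^ (n + (j : ℕ)) * M (Fin.last n) j *
        cullisTerm (M.submatrix Fin.castSucc j.succAbove) g := by
  rw [cullisTerm, det_succ_row _ (Fin.last k), mul_sum]
  refine sum_congr rfl fun j _ => ?_
  simp only [cullisTerm, submatrix_submatrix, CompTriple.comp_eq, Fin.sum_univ_castSucc,
    Fin.snoc_castSucc, Function.comp_apply, Fin.val_castSucc, Fin.snoc_last, Fin.val_last,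
    submatrix_apply, id_eq, Fin.succAbove_last, Fin.snoc_comp_castSucc]
  have hsign : (-1 : F) ^ (∑ α : Fin k, ((g α : ℕ) + α) + (n + k)) * (-1) ^ (k + (j : ℕ)) =
      (-1) ^ (n + (j : ℕ)) * (-1) ^ ∑ α : Fin k, ((g α : ℕ) + α) := by
    rw [← pow_add, ← pow_add]
    exact neg_one_pow_congr (by simp only [Nat.even_add]; tauto)
  linear_combination
    (M (Fin.last n) j * (M.submatrix (Fin.castSucc ∘ g) j.succAbove).det) * hsign

open Classical in
lemma sum_cullisTerm_of_last_ne_last (M : Matrix (Fin (n + 1)) (Fin (k + 1)) F) :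
    ∑ f ∈ (univ.filter (fun f : Fin (k + 1) → Fin (n + 1) => StrictMono f)).filter
        (fun f => f (Fin.last k) ≠ Fin.last n), cullisTerm M f =
      cullisDet (M.submatrix Fin.castSucc id) := by
  rw [cullisDet_eq_sum_cullisTerm]
  refine (sum_bij (fun g _ => Fin.castSucc ∘ g) ?_ ?_ ?_ ?_).symm
  · intro g hg
    simp only [mem_filter, mem_univ, true_and] at hg ⊢
    exact ⟨Fin.strictMono_castSucc.comp hg, Fin.castSucc_ne_last _⟩
  · intro g₁ _ g₂ _ h
    exact funext fun α => Fin.castSucc_injective _ (congrFun h α)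
  · intro f hf
    simp only [mem_filter, mem_univ, true_and] at hf
    obtain ⟨hf, hlast⟩ := hf
    have hne : ∀ α, f α ≠ Fin.last n := fun α h =>
      hlast (le_antisymm (Fin.le_last _) (h ▸ hf.monotone (Fin.le_last α)))
    refine ⟨fun α => (f α).castPred (hne α), ?_, funext fun α => Fin.castSucc_castPred _ _⟩
    simp only [mem_filter, mem_univ, true_and]
    exact fun a b hab => Fin.castPred_lt_castPred_iff.mpr (hf hab)
  · intro g _
    exact cullisTerm_castSucc_comp M g

open Classical in
lemma sum_cullisTerm_of_last_eq_last (M : Matrix (Fin (n + 1)) (Fin (k + 1)) F) :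
    ∑ f ∈ (univ.filter (fun f : Fin (k + 1) → Fin (n + 1) => StrictMono f)).filter
        (fun f => f (Fin.last k) = Fin.last n), cullisTerm M f =
      ∑ j : Fin (k + 1), (-1) ^ (n + (j : ℕ)) * M (Fin.last n) j *
        cullisDet (M.submatrix Fin.castSucc j.succAbove) := by
  simp_rw [cullisDet_eq_sum_cullisTerm, mul_sum]
  rw [sum_comm]
  refine (sum_bij (fun g _ => Fin.snoc (Fin.castSucc ∘ g) (Fin.last n)) ?_ ?_ ?_ ?_).symm
  · intro g hg
    simp only [mem_filter, mem_univ, true_and] at hg ⊢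
    exact ⟨strictMono_snoc_castSucc_last hg, Fin.snoc_last _ _⟩
  · intro g₁ _ g₂ _ h
    funext α
    simpa using congrFun h α.castSucc
  · intro f hf
    simp only [mem_filter, mem_univ, true_and] at hf
    obtain ⟨hf, hlast⟩ := hf
    have hne : ∀ α : Fin k, f α.castSucc ≠ Fin.last n := fun α =>
      (hlast ▸ hf (Fin.castSucc_lt_last α)).ne
    refine ⟨fun α => (f α.castSucc).castPred (hne α), ?_, ?_⟩
    · simp only [mem_filter, mem_univ, true_and]
      exact fun a b hab =>
        Fin.castPred_lt_castPred_iff.mpr (hf (Fin.castSucc_lt_castSucc_iff.mpr hab))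
    · conv_rhs => rw [← Fin.snoc_init_self f, hlast]
      rfl
  · intro g _
    exact (cullisTerm_snoc_last M g).symm

lemma cullisDet_succ_row_last (M : Matrix (Fin (n + 1)) (Fin (k + 1)) F) :
    cullisDet M = cullisDet (M.submatrix Fin.castSucc id) +
      ∑ j : Fin (k + 1), (-1) ^ (n + (j : ℕ)) * M (Fin.last n) j *
        cullisDet (M.submatrix Fin.castSucc j.succAbove) := by
  classical
  rw [cullisDet_eq_sum_cullisTerm, ← sum_filter_not_add_sum_filter _
    (fun f => f (Fin.last k) = Fin.last n), sum_cullisTerm_of_last_ne_last,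
    sum_cullisTerm_of_last_eq_last]

lemma cullisDet_fin_one (M : Matrix (Fin n) (Fin 1) F) :
    cullisDet M = ∑ i : Fin n, (-1) ^ (i : ℕ) * M i 0 := by
  induction n with
  | zero => exact cullisDet_eq_zero_of_lt M Nat.one_pos
  | succ n ih =>
    rw [cullisDet_succ_row_last, ih,
      Fin.sum_univ_castSucc (fun i : Fin (n + 1) => (-1 : F) ^ (i : ℕ) * M i 0)]
    simp

lemma cullisDet_of_col_last_eq_single (M : Matrix (Fin (n + 1)) (Fin (k + 1)) F)
    (hM : ∀ i, M i (Fin.last k) = if i = Fin.last n then 1 else 0) :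
    cullisDet M = (-1) ^ (n + k) * cullisDet (M.submatrix Fin.castSucc Fin.castSucc) := by
  have hzero : ∀ j : Fin k,
      cullisDet (M.submatrix Fin.castSucc (Fin.castSucc j).succAbove) = 0 := by
    intro j
    obtain ⟨c, hc⟩ := Fin.exists_succAbove_eq (Fin.castSucc_lt_last j).ne'
    refine cullisDet_eq_zero_of_col_eq_zero _ c fun i => ?_
    simp [hc, hM, Fin.castSucc_ne_last]
  rw [cullisDet_succ_row_last, cullisDet_eq_zero_of_col_eq_zero _ (Fin.last k)
    (by simp [hM, Fin.castSucc_ne_last]), Fin.sum_univ_castSucc]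
  simp [hzero, hM]

lemma cullisDet_of_cols_eq_single {p q r : ℕ} (M : Matrix (Fin (p + r)) (Fin (q + r)) F)
    (hM : ∀ i t, M i (Fin.natAdd q t) = if i = Fin.natAdd p t then 1 else 0) :
    cullisDet M =
      (-1) ^ (r * (p + q)) * cullisDet (M.submatrix (Fin.castAdd r) (Fin.castAdd r)) := by
  induction r with
  | zero => simp
  | succ r ih =>
    rw [cullisDet_of_col_last_eq_single (n := p + r) (k := q + r) M, ih, submatrix_submatrix]
    · rw [← mul_assoc, ← pow_add]
      congr 1
      exact neg_one_pow_congr (by simp only [Nat.even_add, Nat.even_mul]; tauto)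
    · intro i t
      have h := hM i.castSucc t.castSucc
      rw [Fin.natAdd_castSucc, Fin.natAdd_castSucc] at h
      simpa only [submatrix_apply, Fin.castSucc_inj] using h
    · intro i
      simpa using hM i (Fin.last r)

section TopPair

variable (c : F) {p : ℕ}

lemma cullisDet_fin_one_of_top_pair (M : Matrix (Fin (p + 2)) (Fin 1) F)
    (hM : ∀ i, M i 0 = if (i : ℕ) < 2 then c else 0) : cullisDet M = 0 := by
  simp [cullisDet_fin_one, Fin.sum_univ_succ, hM]

lemma cullisDet_fin_two_of_top_pair (M : Matrix (Fin (p + 2)) (Fin 2) F)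
    (hM : ∀ i, M i 1 = if (i : ℕ) < 2 then c else 0) : cullisDet M = c * (M 0 0 - M 1 0) := by
  induction p with
  | zero =>
    rw [cullisDet_succ_row_last, cullisDet_eq_zero_of_lt _ (by norm_num)]
    simp [cullisDet_fin_one, Fin.sum_univ_two, hM]
    ring
  | succ p ih =>
    rw [cullisDet_succ_row_last, ih _ fun i => by simp [hM], Fin.sum_univ_two,
      cullisDet_fin_one_of_top_pair c _ fun i => by simp [hM]]
    simp [hM]

lemma cullisDet_fin_three_of_top_pair (M : Matrix (Fin (p + 2)) (Fin 3) F)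
    (hM : ∀ i, M i 2 = if (i : ℕ) < 2 then c else 0) :
    cullisDet M = c * ∑ i : Fin p, (-1) ^ ((i : ℕ) + 3) *
      ((M 0 0 - M 1 0) * M (i.addNat 2) 1 - (M 0 1 - M 1 1) * M (i.addNat 2) 0) := by
  induction p with
  | zero => simp [cullisDet_eq_zero_of_lt]
  | succ p ih =>
    rw [cullisDet_succ_row_last, ih _ fun i => by simp [hM], Fin.sum_univ_three,
      cullisDet_fin_two_of_top_pair c _ fun i => by simp [hM],
      cullisDet_fin_two_of_top_pair c _ fun i => by simp [hM], Fin.sum_univ_castSucc]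
    have hrow : ∀ i : Fin p, (i.addNat 2).castSucc = i.castSucc.addNat 2 := fun i => rfl
    simp [hM, hrow]
    ring

end TopPair

/-- The column `±(e₁ + e₂)` followed by the unit vectors of the last `k - 3` rows; the sign
cancels the one produced by stripping off those rows. -/
def cullisWitness (n k : ℕ) : Matrix (Fin n) (Fin (k - 2)) F := fun i j =>
  if (j : ℕ) = 0 then (if (i : ℕ) < 2 then (-1) ^ ((k - 3) * (n + k)) else 0)
  else if (i : ℕ) = n - k + 2 + j then 1 else 0

variable {p r : ℕ} (X : Matrix (Fin (p + 2 + r)) (Fin 2) F)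

lemma hcatK_cullisWitness_natAdd (hp : 1 ≤ p) (i : Fin (p + 2 + r)) (t : Fin r) :
    hcatK X (cullisWitness (p + 2 + r) (3 + r)) i (Fin.natAdd 3 t) =
      if i = Fin.natAdd (p + 2) t then 1 else 0 := by
  have hrow : p + 2 + r - (3 + r) + 2 + (3 + (t : ℕ) - 2) = p + 2 + t := by omega
  simp only [hcatK, cullisWitness, Fin.val_natAdd, Fin.ext_iff, hrow]
  rw [dif_neg (by omega), if_neg (by omega)]

lemma hcatK_cullisWitness_castAdd_two (i : Fin (p + 2)) :
    (hcatK X (cullisWitness (p + 2 + r) (3 + r))).submatrix (Fin.castAdd r) (Fin.castAdd r) i 2 =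
      if (i : ℕ) < 2 then (-1) ^ (r * (p + 2 + r + (3 + r))) else 0 := by
  simp [hcatK, cullisWitness]

end CullisDet

lemma sum_attach_Icc_eq_sum_fin {M : Type*} [AddCommMonoid M] {a b p : ℕ} (h : b + 1 = p + a)
    (g : {l // l ∈ Icc a b} → M) :
    ∑ l ∈ (Icc a b).attach, g l = ∑ i : Fin p, g ⟨i + a, mem_Icc.mpr (by omega)⟩ := by
  refine (sum_nbij' (fun i => ⟨i + a, mem_Icc.mpr (by omega)⟩)
    (fun l => ⟨l - a, by have := mem_Icc.mp l.2; omega⟩) (by simp) (by simp) ?_ ?_ ?_).symm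
  · intro i _
    ext
    simp
  · intro l _
    have := mem_Icc.mp l.2
    ext
    simp only
    omega
  · intro i _
    rfl

/-- for `n ≥ k ≥ 3`, for every `n × 2` matrix `X` there is `B` with
`cullisDet (X|B) = Σ_{l=3}^{n−k+3} (−1)^l ((x₁₁ − x₂₁) x_{l,2} − (x₁₂ − x₂₂) x_{l,1})`
(row indices `l` taken `1`-indexed). -/
theorem cullis_exists_diff_sum {F : Type*} [Field F] (n k : ℕ)
    (hk : 3 ≤ k) (hn : k ≤ n) (X : Matrix (Fin n) (Fin 2) F) :
    ∃ B : Matrix (Fin n) (Fin (k - 2)) F,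
      cullisDet (hcatK X B) =
        ∑ l ∈ (Finset.Icc 3 (n - k + 3)).attach,
          (-1 : F) ^ (l : ℕ) *
            ((X ⟨0, by omega⟩ 0 - X ⟨1, by omega⟩ 0) *
                X ⟨(l : ℕ) - 1, by have := Finset.mem_Icc.mp l.2; omega⟩ 1 -
             (X ⟨0, by omega⟩ 1 - X ⟨1, by omega⟩ 1) *
                X ⟨(l : ℕ) - 1, by have := Finset.mem_Icc.mp l.2; omega⟩ 0) := by
  obtain ⟨r, rfl⟩ : ∃ r, k = 3 + r := ⟨k - 3, by omega⟩
  obtain ⟨p, rfl⟩ : ∃ p, n = p + 2 + r := ⟨n - 2 - r, by omega⟩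
  refine ⟨cullisWitness (p + 2 + r) (3 + r), ?_⟩
  have hsign : (-1 : F) ^ (r * (p + 2 + 3)) * (-1) ^ (r * (p + 2 + r + (3 + r))) = 1 := by
    rw [← pow_add]
    exact Even.neg_one_pow ⟨r * (p + 5 + r), by ring⟩
  rw [cullisDet_of_cols_eq_single (p := p + 2) (q := 3) _
      (hcatK_cullisWitness_natAdd X (by omega)),
    cullisDet_fin_three_of_top_pair _ _ (hcatK_cullisWitness_castAdd_two X), ← mul_assoc,
    hsign, one_mul, sum_attach_Icc_eq_sum_fin (p := p) (by omega)]
  exact sum_congr rfl fun i _ => by simp [hcatK]; rfl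
end

section
/- Assume n ≥ 4 and n is even. Define the linear map T' : M_{n,2}(F) → M_{n,2}(F) by: (T'(X))_{1,1} = Σ_{i=2}^{n−1} (−1)^i x_{i,1} + Σ_{i=2}^{n} (−1)^i x_{i,2}, (T'(X))_{n,2} = Σ_{i=2}^{n−1} (−1)^{i−1} x_{i,2} + Σ_{i=1}^{n−1} (−1)^{i−1} x_{i,1}, and (T'(X))_{i,j} = x_{i,j} for all other entries (i,j). Then: (1) det_{n,2}(T'(X)) = det_{n,2}(X) for all X ∈ M_{n,2}(F); and (2) there do NOT exist matrices A ∈ M_{n,n}(F), B ∈ M_{2,2}(F), and a linear map φ : M_{n,2}(F) → M_{n,2}(F) whose image is contained in the set of n×2 matrices all of whose rows are equal, such that T'(X) = A·X·B + φ(X) for all X ∈ M_{n,2}(F). -/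
/-- The map `T'` of STATEMENT 19 on `M_{n,2}(F)` (indices in the sums `1`-indexed in the
paper, `0`-indexed here): it replaces the `(1,1)` entry by
`Σ_{i=2}^{n−1} (−1)^i x_{i,1} + Σ_{i=2}^{n} (−1)^i x_{i,2}` and the `(n,2)` entry by
`Σ_{i=2}^{n−1} (−1)^{i−1} x_{i,2} + Σ_{i=1}^{n−1} (−1)^{i−1} x_{i,1}`, keeping all other
entries. -/
def Tmap' (F : Type*) [Field F] (n : ℕ) (X : Matrix (Fin n) (Fin 2) F) :
    Matrix (Fin n) (Fin 2) F :=
  fun i j =>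
    if (i : ℕ) = 0 ∧ (j : ℕ) = 0 then
      (∑ r ∈ Finset.univ.filter (fun r : Fin n => 1 ≤ (r : ℕ) ∧ (r : ℕ) ≤ n - 2),
          (-1 : F) ^ ((r : ℕ) + 1) * X r 0) +
      (∑ r ∈ Finset.univ.filter (fun r : Fin n => 1 ≤ (r : ℕ) ∧ (r : ℕ) ≤ n - 1),
          (-1 : F) ^ ((r : ℕ) + 1) * X r 1)
    else if (i : ℕ) = n - 1 ∧ (j : ℕ) = 1 then
      (∑ r ∈ Finset.univ.filter (fun r : Fin n => 1 ≤ (r : ℕ) ∧ (r : ℕ) ≤ n - 2),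
          (-1 : F) ^ (r : ℕ) * X r 1) +
      (∑ r ∈ Finset.univ.filter (fun r : Fin n => (r : ℕ) ≤ n - 2),
          (-1 : F) ^ (r : ℕ) * X r 0)
    else X i j

private lemma strictMono_fin_two {n : ℕ} (f : Fin 2 → Fin n) :
    StrictMono f ↔ f 0 < f 1 := by
  constructor
  · exact fun h => h (by decide)
  · intro h a b hab
    fin_cases a <;> fin_cases b <;> simp_all

private lemma cullisDet_pair {F : Type*} [Field F] {n : ℕ} (X : Matrix (Fin n) (Fin 2) F) :
    cullisDet X = ∑ p ∈ (Finset.univ ×ˢ Finset.univ).filter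
        (fun p : Fin n × Fin n => p.1 < p.2),
      (-1 : F) ^ ((p.1 : ℕ) + (p.2 : ℕ) + 1) *
        (X p.1 0 * X p.2 1 - X p.1 1 * X p.2 0) := by
  classical
  rw [cullisDet]
  refine Finset.sum_nbij' (fun f => (f 0, f 1)) (fun p => ![p.1, p.2]) ?_ ?_ ?_ ?_ ?_
  · intro f hf
    simp only [Finset.mem_filter, Finset.mem_univ, true_and] at hf ⊢
    rw [Finset.mem_product]
    refine ⟨⟨Finset.mem_univ _, Finset.mem_univ _⟩, (strictMono_fin_two f).1 hf⟩
  · intro p hp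
    simp only [Finset.mem_filter, Finset.mem_product, Finset.mem_univ, true_and] at hp ⊢
    exact (strictMono_fin_two _).2 (by simpa using hp)
  · intro f hf
    funext t
    fin_cases t <;> simp
  · intro p hp
    simp
  · intro f hf
    rw [Matrix.det_fin_two]
    simp only [Fin.sum_univ_two, Matrix.submatrix_apply, id_eq, Fin.val_zero, Fin.val_one]
    ring_nf

section cols
variable {F : Type*} [Field F] {n : ℕ} (hn : 4 ≤ n) (hpar : Even n)
  (X : Matrix (Fin n) (Fin 2) F)

private noncomputable def Pv : F :=
  ∑ r ∈ Finset.univ.filter (fun r : Fin n => (r : ℕ) ≤ n - 2), (-1 : F) ^ (r : ℕ) * X r 0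
private noncomputable def Qv : F :=
  ∑ r ∈ Finset.univ.filter (fun r : Fin n => 1 ≤ (r : ℕ)), (-1 : F) ^ (r : ℕ) * X r 1

include hn in
private lemma Tcol0 (i : Fin n) :
    Tmap' F n X i 0 = X i 0 + (if (i : ℕ) = 0 then -(Pv X + Qv X) else 0) := by
  by_cases h0 : (i : ℕ) = 0
  · have hi : i = ⟨0, by omega⟩ := Fin.ext h0
    rw [Tmap', if_pos ⟨h0, rfl⟩, if_pos h0]
    have e1 : (∑ r ∈ Finset.univ.filter (fun r : Fin n => 1 ≤ (r : ℕ) ∧ (r : ℕ) ≤ n - 2),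
        (-1 : F) ^ ((r : ℕ) + 1) * X r 0) + Pv X = X i 0 := by
      rw [Pv, Finset.sum_filter, Finset.sum_filter, ← Finset.sum_add_distrib]
      have : ∀ r : Fin n,
          ((if 1 ≤ (r : ℕ) ∧ (r : ℕ) ≤ n - 2 then (-1 : F) ^ ((r : ℕ) + 1) * X r 0 else 0) +
            (if (r : ℕ) ≤ n - 2 then (-1 : F) ^ (r : ℕ) * X r 0 else 0)) =
          (if r = i then X r 0 else 0) := by
        intro r
        by_cases hr0 : (r : ℕ) = 0
        · have : r = i := Fin.ext (by omega)
          have h2 : (r : ℕ) ≤ n - 2 := by omega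
          simp [this, h0, h2, hn]
        · by_cases hr2 : (r : ℕ) ≤ n - 2
          · have : ¬ r = i := fun h => hr0 (by rw [h]; exact h0)
            rw [if_pos ⟨by omega, hr2⟩, if_pos hr2, if_neg this, pow_succ]
            ring
          · have : ¬ r = i := fun h => hr0 (by rw [h]; exact h0)
            simp [hr2, this, fun (h : 1 ≤ (r:ℕ)) => hr2]
      rw [Finset.sum_congr rfl (fun r _ => this r), Finset.sum_ite_eq' Finset.univ i
        (fun r => X r 0), if_pos (Finset.mem_univ i)]
    have e2 : (∑ r ∈ Finset.univ.filter (fun r : Fin n => 1 ≤ (r : ℕ) ∧ (r : ℕ) ≤ n - 1),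
        (-1 : F) ^ ((r : ℕ) + 1) * X r 1) + Qv X = 0 := by
      rw [Qv, Finset.sum_filter, Finset.sum_filter, ← Finset.sum_add_distrib]
      refine Finset.sum_eq_zero fun r _ => ?_
      by_cases hr0 : 1 ≤ (r : ℕ)
      · have h1 : (r : ℕ) ≤ n - 1 := by have := r.isLt; omega
        rw [if_pos ⟨hr0, h1⟩, if_pos hr0, pow_succ]
        ring
      · simp [hr0, fun (h : 1 ≤ (r:ℕ) ∧ True) => hr0 h.1]
    linear_combination e1 + e2
  · have h1 : ¬ ((i : ℕ) = 0 ∧ ((0 : Fin 2) : ℕ) = 0) := fun h => h0 h.1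
    have h2 : ¬ ((i : ℕ) = n - 1 ∧ ((0 : Fin 2) : ℕ) = 1) := by simp
    rw [Tmap', if_neg h1, if_neg h2, if_neg h0, add_zero]

include hn hpar in
private lemma Tcol1 (i : Fin n) :
    Tmap' F n X i 1 = X i 1 + (if (i : ℕ) = n - 1 then Pv X + Qv X else 0) := by
  have hodd : Odd (n - 1) := Nat.Even.sub_odd (by omega) hpar odd_one
  by_cases h0 : (i : ℕ) = n - 1
  · have h1 : ¬ ((i : ℕ) = 0 ∧ ((1 : Fin 2) : ℕ) = 0) := by simp
    rw [Tmap', if_neg h1, if_pos ⟨h0, rfl⟩, if_pos h0]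
    have e2 : (∑ r ∈ Finset.univ.filter (fun r : Fin n => 1 ≤ (r : ℕ) ∧ (r : ℕ) ≤ n - 2),
        (-1 : F) ^ (r : ℕ) * X r 1) - Qv X = X i 1 := by
      rw [Qv, Finset.sum_filter, Finset.sum_filter, ← Finset.sum_sub_distrib]
      have : ∀ r : Fin n,
          ((if 1 ≤ (r : ℕ) ∧ (r : ℕ) ≤ n - 2 then (-1 : F) ^ (r : ℕ) * X r 1 else 0) -
            (if 1 ≤ (r : ℕ) then (-1 : F) ^ (r : ℕ) * X r 1 else 0)) =
          (if r = i then X r 1 else 0) := by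
        intro r
        by_cases hr0 : 1 ≤ (r : ℕ)
        · by_cases hr2 : (r : ℕ) ≤ n - 2
          · have : ¬ r = i := by
              intro h; rw [h] at hr2; omega
            simp [hr0, hr2, this]
          · have hrv : (r : ℕ) = n - 1 := by have := r.isLt; omega
            have : r = i := Fin.ext (by omega)
            rw [if_neg (fun h => hr2 h.2), if_pos hr0, if_pos this, hrv,
              Odd.neg_one_pow hodd]
            ring
        · have hne : ¬ r = i := by
            intro h; rw [h] at hr0; omega
          simp [hr0, hne, fun (h : 1 ≤ (r:ℕ) ∧ True) => hr0 h.1]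
      rw [Finset.sum_congr rfl (fun r _ => this r), Finset.sum_ite_eq' Finset.univ i
        (fun r => X r 1), if_pos (Finset.mem_univ i)]
    have e1 : (∑ r ∈ Finset.univ.filter (fun r : Fin n => (r : ℕ) ≤ n - 2),
        (-1 : F) ^ (r : ℕ) * X r 0) = Pv X := rfl
    linear_combination e2 + e1
  · have h1 : ¬ ((i : ℕ) = 0 ∧ ((1 : Fin 2) : ℕ) = 0) := by simp
    have h2 : ¬ ((i : ℕ) = n - 1 ∧ ((1 : Fin 2) : ℕ) = 1) := fun h => h0 h.1
    rw [Tmap', if_neg h1, if_neg h2, if_neg h0, add_zero]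

end cols

private lemma key_diff {F : Type*} [Field F] {n : ℕ} (hn : 4 ≤ n) (hpar : Even n)
    (X Y : Matrix (Fin n) (Fin 2) F) (P Q : F)
    (hc0 : ∀ i : Fin n, Y i 0 = X i 0 + (if (i : ℕ) = 0 then -(P + Q) else 0))
    (hc1 : ∀ i : Fin n, Y i 1 = X i 1 + (if (i : ℕ) = n - 1 then P + Q else 0))
    (hP : P = ∑ r ∈ Finset.univ.filter (fun r : Fin n => (r : ℕ) ≤ n - 2),
      (-1 : F) ^ (r : ℕ) * X r 0)
    (hQ : Q = ∑ r ∈ Finset.univ.filter (fun r : Fin n => 1 ≤ (r : ℕ)),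
      (-1 : F) ^ (r : ℕ) * X r 1) :
    (∑ p ∈ (Finset.univ ×ˢ Finset.univ).filter (fun p : Fin n × Fin n => p.1 < p.2),
      (-1 : F) ^ ((p.1 : ℕ) + (p.2 : ℕ) + 1) * (Y p.1 0 * Y p.2 1 - Y p.1 1 * Y p.2 0)) =
    (∑ p ∈ (Finset.univ ×ˢ Finset.univ).filter (fun p : Fin n × Fin n => p.1 < p.2),
      (-1 : F) ^ ((p.1 : ℕ) + (p.2 : ℕ) + 1) * (X p.1 0 * X p.2 1 - X p.1 1 * X p.2 0)) := by
  classical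
  set s : F := P + Q with hs
  set z0 : Fin n := ⟨0, by omega⟩ with hz0
  set zl : Fin n := ⟨n - 1, by omega⟩ with hzl
  rw [← sub_eq_zero, ← Finset.sum_sub_distrib]
  have hstep : ∀ p ∈ (Finset.univ ×ˢ Finset.univ).filter (fun p : Fin n × Fin n => p.1 < p.2),
      ((-1 : F) ^ ((p.1 : ℕ) + (p.2 : ℕ) + 1) * (Y p.1 0 * Y p.2 1 - Y p.1 1 * Y p.2 0) -
       (-1 : F) ^ ((p.1 : ℕ) + (p.2 : ℕ) + 1) * (X p.1 0 * X p.2 1 - X p.1 1 * X p.2 0)) =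
      s * ((if (p.1 : ℕ) = 0 ∧ (p.2 : ℕ) = n - 1 then X z0 0 - X zl 1 - s else 0) +
        (if (p.1 : ℕ) = 0 ∧ ¬ (p.2 : ℕ) = n - 1 then (-1 : F) ^ (p.2 : ℕ) * X p.2 1 else 0) +
        (if ¬ (p.1 : ℕ) = 0 ∧ (p.2 : ℕ) = n - 1 then (-1 : F) ^ (p.1 : ℕ) * X p.1 0 else 0)) := by
    intro p hp
    rw [Finset.mem_filter] at hp
    have hlt : (p.1 : ℕ) < (p.2 : ℕ) := hp.2
    have h2lt : (p.2 : ℕ) ≤ n - 1 := by have := p.2.isLt; omega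
    have h1ne : ¬ (p.1 : ℕ) = n - 1 := by omega
    have h2ne : ¬ (p.2 : ℕ) = 0 := by omega
    rw [hc0 p.1, hc0 p.2, hc1 p.1, hc1 p.2, if_neg h1ne, if_neg h2ne, add_zero, add_zero]
    by_cases h1 : (p.1 : ℕ) = 0 <;> by_cases h2 : (p.2 : ℕ) = n - 1
    · have e1 : p.1 = z0 := Fin.ext h1
      have e2 : p.2 = zl := Fin.ext h2
      rw [if_pos h1, if_pos h2,
        if_pos (show (p.1 : ℕ) = 0 ∧ (p.2 : ℕ) = n - 1 from ⟨h1, h2⟩),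
        if_neg (show ¬ ((p.1 : ℕ) = 0 ∧ ¬ (p.2 : ℕ) = n - 1) from fun h => h.2 h2),
        if_neg (show ¬ (¬ (p.1 : ℕ) = 0 ∧ (p.2 : ℕ) = n - 1) from fun h => h.1 h1),
        h1, h2, e1, e2]
      have hpow : (-1 : F) ^ (0 + (n - 1) + 1) = 1 := by
        rw [show 0 + (n - 1) + 1 = n by omega]
        exact Even.neg_one_pow hpar
      rw [hpow]
      ring
    · rw [if_pos h1, if_neg h2,
        if_neg (show ¬ ((p.1 : ℕ) = 0 ∧ (p.2 : ℕ) = n - 1) from fun h => h2 h.2),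
        if_pos (show (p.1 : ℕ) = 0 ∧ ¬ (p.2 : ℕ) = n - 1 from ⟨h1, h2⟩),
        if_neg (show ¬ (¬ (p.1 : ℕ) = 0 ∧ (p.2 : ℕ) = n - 1) from fun h => h.1 h1),
        h1]
      rw [show (0 : ℕ) + (p.2 : ℕ) + 1 = (p.2 : ℕ) + 1 by omega, pow_succ]
      ring
    · rw [if_neg h1, if_pos h2,
        if_neg (show ¬ ((p.1 : ℕ) = 0 ∧ (p.2 : ℕ) = n - 1) from fun h => h1 h.1),
        if_neg (show ¬ ((p.1 : ℕ) = 0 ∧ ¬ (p.2 : ℕ) = n - 1) from fun h => h1 h.1),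
        if_pos (show ¬ (p.1 : ℕ) = 0 ∧ (p.2 : ℕ) = n - 1 from ⟨h1, h2⟩),
        h2]
      have hpow : (-1 : F) ^ ((p.1 : ℕ) + (n - 1) + 1) = (-1 : F) ^ (p.1 : ℕ) := by
        rw [show (p.1 : ℕ) + (n - 1) + 1 = (p.1 : ℕ) + n by omega, pow_add,
          Even.neg_one_pow hpar, mul_one]
      rw [hpow]
      ring
    · rw [if_neg h1, if_neg h2,
        if_neg (show ¬ ((p.1 : ℕ) = 0 ∧ (p.2 : ℕ) = n - 1) from fun h => h1 h.1),
        if_neg (show ¬ ((p.1 : ℕ) = 0 ∧ ¬ (p.2 : ℕ) = n - 1) from fun h => h1 h.1),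
        if_neg (show ¬ (¬ (p.1 : ℕ) = 0 ∧ (p.2 : ℕ) = n - 1) from fun h => h2 h.2)]
      ring
  rw [Finset.sum_congr rfl hstep, ← Finset.mul_sum]
  have hsplit : (∑ p ∈ (Finset.univ ×ˢ Finset.univ).filter
      (fun p : Fin n × Fin n => p.1 < p.2),
      ((if (p.1 : ℕ) = 0 ∧ (p.2 : ℕ) = n - 1 then X z0 0 - X zl 1 - s else 0) +
        (if (p.1 : ℕ) = 0 ∧ ¬ (p.2 : ℕ) = n - 1 then (-1 : F) ^ (p.2 : ℕ) * X p.2 1 else 0) +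
        (if ¬ (p.1 : ℕ) = 0 ∧ (p.2 : ℕ) = n - 1 then (-1 : F) ^ (p.1 : ℕ) * X p.1 0 else 0))) =
      (X z0 0 - X zl 1 - s) + (Q + X zl 1) + (P - X z0 0) := by
    rw [Finset.sum_add_distrib, Finset.sum_add_distrib]
    congr 1
    · congr 1
      · -- A sum
        have hcond : ∀ p : Fin n × Fin n, ((p.1 : ℕ) = 0 ∧ (p.2 : ℕ) = n - 1) ↔ p = (z0, zl) := by
          intro p
          rw [Prod.ext_iff, Fin.ext_iff, Fin.ext_iff]
        simp only [hcond]
        rw [Finset.sum_ite_eq' _ ((z0, zl) : Fin n × Fin n) (fun _ => X z0 0 - X zl 1 - s)]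
        rw [if_pos]
        rw [Finset.mem_filter, Finset.mem_product]
        exact ⟨⟨Finset.mem_univ _, Finset.mem_univ _⟩, by
          show z0 < zl
          rw [Fin.lt_def]
          show 0 < n - 1
          omega⟩
      · -- B sum
        rw [Finset.sum_filter, Finset.sum_product]
        rw [Finset.sum_eq_single z0]
        · have : ∀ j : Fin n,
              (if z0 < j then
                (if (z0 : ℕ) = 0 ∧ ¬ (j : ℕ) = n - 1 then (-1 : F) ^ (j : ℕ) * X j 1 else 0)
               else 0) =
              (if 1 ≤ (j : ℕ) then (-1 : F) ^ (j : ℕ) * X j 1 else 0) +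
              (if j = zl then X j 1 else 0) := by
            intro j
            have hz0j : (z0 < j) ↔ 1 ≤ (j : ℕ) := by rw [Fin.lt_def]; exact Iff.rfl
            by_cases hj1 : 1 ≤ (j : ℕ)
            · by_cases hjl : (j : ℕ) = n - 1
              · have : j = zl := Fin.ext hjl
                rw [if_pos (hz0j.2 hj1), if_neg (fun h => h.2 hjl), if_pos hj1, if_pos this,
                  hjl, Odd.neg_one_pow (Nat.Even.sub_odd (by omega) hpar odd_one)]
                ring
              · have : ¬ j = zl := fun h => hjl (by rw [h])
                rw [if_pos (hz0j.2 hj1), if_pos ⟨rfl, hjl⟩, if_pos hj1, if_neg this, add_zero]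
            · have hj0 : (j : ℕ) = 0 := by omega
              have : ¬ j = zl := fun h => by rw [h] at hj0; simp [zl] at hj0; omega
              rw [if_neg (fun h => hj1 (hz0j.1 h)), if_neg hj1, if_neg this, add_zero]
          rw [Finset.sum_congr rfl (fun j _ => this j), Finset.sum_add_distrib,
            Finset.sum_ite_eq' Finset.univ zl (fun j => X j 1), if_pos (Finset.mem_univ _),
            ← Finset.sum_filter, ← hQ]
        · intro i _ hi
          refine Finset.sum_eq_zero fun j _ => ?_
          have : ¬ (i : ℕ) = 0 := fun h => hi (Fin.ext h)
          by_cases hij : i < j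
          · rw [if_pos hij, if_neg (fun h => this h.1)]
          · rw [if_neg hij]
        · intro h
          exact absurd (Finset.mem_univ z0) h
      -- C sum
    · rw [Finset.sum_filter, Finset.sum_product]
      have inner : ∀ i : Fin n,
          (∑ j : Fin n, if i < j then
            (if ¬ (i : ℕ) = 0 ∧ (j : ℕ) = n - 1 then (-1 : F) ^ (i : ℕ) * X i 0 else 0)
           else 0) =
          (if (i : ℕ) ≤ n - 2 then (-1 : F) ^ (i : ℕ) * X i 0 else 0) -
          (if i = z0 then X i 0 else 0) := by
        intro i
        have : ∀ j : Fin n,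
            (if i < j then
              (if ¬ (i : ℕ) = 0 ∧ (j : ℕ) = n - 1 then (-1 : F) ^ (i : ℕ) * X i 0 else 0)
             else 0) =
            (if j = zl then
              (if 1 ≤ (i : ℕ) ∧ (i : ℕ) ≤ n - 2 then (-1 : F) ^ (i : ℕ) * X i 0 else 0)
             else 0) := by
          intro j
          by_cases hjl : j = zl
          · subst hjl
            by_cases hi0 : (i : ℕ) = 0
            · rw [if_pos,
                if_neg (show ¬ (¬ (i : ℕ) = 0 ∧ (zl : ℕ) = n - 1) from fun h => h.1 hi0),
                if_pos rfl,
                if_neg (show ¬ (1 ≤ (i : ℕ) ∧ (i : ℕ) ≤ n - 2) from fun h => by omega)]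
              rw [Fin.lt_def]; show (i : ℕ) < n - 1; omega
            · by_cases hile : (i : ℕ) ≤ n - 2
              · rw [if_pos,
                  if_pos (show ¬ (i : ℕ) = 0 ∧ (zl : ℕ) = n - 1 from ⟨hi0, rfl⟩),
                  if_pos rfl,
                  if_pos (show 1 ≤ (i : ℕ) ∧ (i : ℕ) ≤ n - 2 from ⟨by omega, hile⟩)]
                rw [Fin.lt_def]; show (i : ℕ) < n - 1; omega
              · rw [if_neg, if_pos rfl,
                  if_neg (show ¬ (1 ≤ (i : ℕ) ∧ (i : ℕ) ≤ n - 2) from fun h => hile h.2)]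
                rw [Fin.lt_def]; show ¬ (i : ℕ) < n - 1; have := i.isLt; omega
          · have hjv : ¬ (j : ℕ) = n - 1 := fun h => hjl (Fin.ext h)
            rw [if_neg hjl]
            by_cases hij : i < j
            · rw [if_pos hij, if_neg (fun h => hjv h.2)]
            · rw [if_neg hij]
        rw [Finset.sum_congr rfl (fun j _ => this j),
          Finset.sum_ite_eq' Finset.univ zl, if_pos (Finset.mem_univ _)]
        by_cases hi0 : (i : ℕ) = 0
        · have e : i = z0 := Fin.ext hi0
          rw [if_neg (show ¬ (1 ≤ (i : ℕ) ∧ (i : ℕ) ≤ n - 2) from fun h => by omega),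
            if_pos (show (i : ℕ) ≤ n - 2 by omega), if_pos e, hi0, pow_zero]
          ring
        · by_cases hile : (i : ℕ) ≤ n - 2
          · rw [if_pos ⟨by omega, hile⟩, if_pos hile, if_neg (fun h => hi0 (by rw [h])),
              sub_zero]
          · rw [if_neg (fun h => hile h.2), if_neg hile, if_neg (fun h => hi0 (by rw [h])),
              sub_zero]
      rw [Finset.sum_congr rfl (fun i _ => inner i), Finset.sum_sub_distrib,
        Finset.sum_ite_eq' Finset.univ z0 (fun i => X i 0), if_pos (Finset.mem_univ _),
        ← Finset.sum_filter, ← hP]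
  rw [hsplit, hs]
  ring

/-- for even `n ≥ 4`, the linear map `T'` preserves `det_{n,2}`, but it is
not of the form `X ↦ A·X·B + φ(X)` for any `A ∈ M_{n,n}(F)`, `B ∈ M_{2,2}(F)` and linear
map `φ` whose values are matrices all of whose rows are equal. -/
theorem Tmap'_preserves_not_standard {F : Type*} [Field F] (n : ℕ) (hn : 4 ≤ n)
    (hpar : Even n) :
    (∀ X : Matrix (Fin n) (Fin 2) F, cullisDet (Tmap' F n X) = cullisDet X) ∧
    ¬ ∃ (A : Matrix (Fin n) (Fin n) F) (B : Matrix (Fin 2) (Fin 2) F)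
        (phi : Matrix (Fin n) (Fin 2) F → Matrix (Fin n) (Fin 2) F),
        IsLinearMap F phi ∧
        (∀ X : Matrix (Fin n) (Fin 2) F, ∀ i i' : Fin n, ∀ j : Fin 2,
          phi X i j = phi X i' j) ∧
        (∀ X : Matrix (Fin n) (Fin 2) F, Tmap' F n X = A * X * B + phi X) := by
  constructor
  · intro X
    rw [cullisDet_pair (Tmap' F n X), cullisDet_pair X]
    exact key_diff hn hpar X (Tmap' F n X) (Pv X) (Qv X)
      (fun i => Tcol0 hn X i) (fun i => Tcol1 hn hpar X i) rfl rfl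
  ·
    rintro ⟨A, B, phi, hlin, hrow, heq⟩
    set i0 : Fin n := ⟨0, by omega⟩ with hi0d
    set r1 : Fin n := ⟨1, by omega⟩ with hr1d
    set r2 : Fin n := ⟨2, by omega⟩ with hr2d
    set E : Fin n → Fin 2 → Matrix (Fin n) (Fin 2) F :=
      fun a b => Matrix.of (fun i j => if i = a ∧ j = b then (1 : F) else 0) with hE
    have hmul : ∀ (a : Fin n) (b : Fin 2) (i : Fin n) (j : Fin 2),
        (A * E a b * B) i j = A i a * B b j := by
      intro a b i j
      simp [hE, Matrix.mul_apply, Matrix.of_apply, ite_and, mul_ite, mul_zero, mul_one,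
        ite_mul, zero_mul, Finset.sum_ite_eq, Finset.sum_ite_eq']
    have heq' : ∀ (a : Fin n) (b : Fin 2) (i : Fin n) (j : Fin 2),
        Tmap' F n (E a b) i j = A i a * B b j + phi (E a b) i j := by
      intro a b i j
      have := congrFun (congrFun (heq (E a b)) i) j
      rw [this, Matrix.add_apply, hmul]
    -- Tmap' values on column 0 via Tcol0
    have hval : ∀ (a : Fin n) (b : Fin 2) (i : Fin n), ¬ (i : ℕ) = 0 →
        Tmap' F n (E a b) i 0 = E a b i 0 := by
      intro a b i hi
      rw [Tcol0 hn (E a b) i, if_neg hi, add_zero]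
    have hr1v : (r1 : ℕ) ≠ 0 := by simp [hr1d]
    have hr2v : (r2 : ℕ) ≠ 0 := by simp [hr2d]
    -- equation 1 : from E r1 0 at rows r1, r2, column 0
    have h11 : (1 : F) = A r1 r1 * B 0 0 + phi (E r1 0) r1 0 := by
      have := heq' r1 0 r1 0
      rw [hval r1 0 r1 hr1v] at this
      simpa [hE] using this
    have h12 : (0 : F) = A r2 r1 * B 0 0 + phi (E r1 0) r2 0 := by
      have := heq' r1 0 r2 0
      rw [hval r1 0 r2 hr2v] at this
      have hne : ¬ r2 = r1 := by simp [hr1d, hr2d, Fin.ext_iff]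
      simpa [hE, hne] using this
    have hrow1 : phi (E r1 0) r1 0 = phi (E r1 0) r2 0 := hrow _ r1 r2 0
    have hB00 : (A r1 r1 - A r2 r1) * B 0 0 = 1 := by
      linear_combination -h11 + h12 - hrow1
    -- equation 2 : from E r1 1 at rows r1, r2, column 0
    have h21 : (0 : F) = A r1 r1 * B 1 0 + phi (E r1 1) r1 0 := by
      have := heq' r1 1 r1 0
      rw [hval r1 1 r1 hr1v] at this
      simpa [hE] using this
    have h22 : (0 : F) = A r2 r1 * B 1 0 + phi (E r1 1) r2 0 := by
      have := heq' r1 1 r2 0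
      rw [hval r1 1 r2 hr2v] at this
      have hne : ¬ r2 = r1 := by simp [hr1d, hr2d, Fin.ext_iff]
      simpa [hE, hne] using this
    have hB10 : (A r1 r1 - A r2 r1) * B 1 0 = 0 := by
      linear_combination -h21 + h22 - hrow (E r1 1) r1 r2 0
    have hAne : A r1 r1 - A r2 r1 ≠ 0 := by
      intro h
      rw [h, zero_mul] at hB00
      exact zero_ne_one hB00
    have hB10' : B 1 0 = 0 := by
      rcases mul_eq_zero.1 hB10 with h | h
      · exact absurd h hAne
      · exact h
    -- equation 3 : from E r2 1 at rows i0, r1, column 0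
    have h31 : (-1 : F) = A i0 r2 * B 1 0 + phi (E r2 1) i0 0 := by
      have := heq' r2 1 i0 0
      rw [Tcol0 hn (E r2 1) i0, if_pos (show (i0 : ℕ) = 0 from rfl)] at this
      have hPv : Pv (E r2 1) = 0 := by
        rw [Pv]
        refine Finset.sum_eq_zero fun r _ => ?_
        simp [hE]
      have hQv : Qv (E r2 1) = 1 := by
        rw [Qv]
        have : ∀ r : Fin n, (-1 : F) ^ (r : ℕ) * (E r2 1) r 1 =
            if r = r2 then (-1 : F) ^ (r : ℕ) else 0 := by
          intro r
          by_cases hr : r = r2 <;> simp [hE, hr]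
        rw [Finset.sum_congr rfl (fun r _ => this r), Finset.sum_ite_eq']
        rw [if_pos]
        · rw [hr2d]
          norm_num
        · simp [Finset.mem_filter, hr2d]
      have hE0 : E r2 1 i0 0 = 0 := by simp [hE]
      rw [hE0, hPv, hQv] at this
      linear_combination this
    have h32 : (0 : F) = A r1 r2 * B 1 0 + phi (E r2 1) r1 0 := by
      have := heq' r2 1 r1 0
      rw [hval r2 1 r1 hr1v] at this
      have hne : ¬ r1 = r2 := by simp [hr1d, hr2d, Fin.ext_iff]
      simpa [hE, hne] using this
    have : (A i0 r2 - A r1 r2) * B 1 0 = -1 := by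
      linear_combination -h31 + h32 - hrow (E r2 1) i0 r1 0
    rw [hB10', mul_zero] at this
    exact absurd this.symm (by norm_num)
end
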